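/- arXiv:2602.14651 — 3 statements merged into one kernel-verified Lean document; each statement's English description precedes it below -/
import Mathlib

section
/- Suppose a twice continuously differentiable nonnegative function G on ℝⁿ satisfies |D²G| ≤ K on the ball B_{2r}(x) for some r ≥ 1, and suppose |DG(x)| ≥ K·r. Then |DG(x)| ≤ 2·G(x). -/
open Metric Real Set

private lemma iterWithin_eq_aux (f : ℝ → ℝ) (m : ℕ) {y : ℝ} (hy : y ∈ Ioo (0:ℝ) 1) :
    iteratedDerivWithin m f (Icc 0 1) y = iteratedDeriv m f y := by
  rw [iteratedDerivWithin_eq_iteratedFDerivWithin, iteratedDeriv_eq_iteratedFDeriv]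
  congr 1
  have h1 : Icc (0:ℝ) 1 ∩ Ioo 0 1 = Ioo 0 1 := inter_eq_self_of_subset_right Ioo_subset_Icc_self
  rw [← iteratedFDerivWithin_inter_open isOpen_Ioo hy, h1,
    iteratedFDerivWithin_of_isOpen _ isOpen_Ioo hy]

theorem stmt_2 {n : ℕ} (G : EuclideanSpace ℝ (Fin n) → ℝ)
    (hG : ContDiff ℝ 2 G) (hGnn : ∀ y, 0 ≤ G y)
    (x : EuclideanSpace ℝ (Fin n)) (r K : ℝ) (hr : 1 ≤ r) (hKpos : 0 < K)
    (hK : ∀ y ∈ ball x (2 * r), ‖iteratedFDeriv ℝ 2 G y‖ ≤ K)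
    (hbig : K * r ≤ ‖gradient G x‖) :
    ‖gradient G x‖ ≤ 2 * G x := by
  set g : EuclideanSpace ℝ (Fin n) := gradient G x with hgdef
  have hrpos : (0:ℝ) < r := lt_of_lt_of_le one_pos hr
  have hgpos : 0 < ‖g‖ := lt_of_lt_of_le (mul_pos hKpos hrpos) hbig
  have hgne : g ≠ 0 := by
    intro h; rw [h, norm_zero] at hgpos; exact lt_irrefl 0 hgpos
  set h : EuclideanSpace ℝ (Fin n) := (-r) • ((‖g‖⁻¹ : ℝ) • g) with hhdef
  have hnormh : ‖h‖ = r := by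
    rw [hhdef, norm_smul, norm_smul]
    simp [abs_of_pos hrpos, abs_of_nonneg (inv_nonneg.2 (norm_nonneg g)),
      inv_mul_cancel₀ (ne_of_gt hgpos)]
  set c : ℝ → EuclideanSpace ℝ (Fin n) := fun t => x + t • h with hcdef
  set φ : ℝ → ℝ := fun t => G (c t) with hφdef
  have hc0 : c 0 = x := by simp [hcdef]
  -- c is in the ball for t ∈ [0,1]
  have hcball : ∀ t ∈ Icc (0:ℝ) 1, c t ∈ ball x (2 * r) := by
    intro t ht
    rw [mem_ball, dist_eq_norm, hcdef]
    simp only [add_sub_cancel_left]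
    rw [norm_smul, hnormh, Real.norm_eq_abs, abs_of_nonneg ht.1]
    nlinarith [ht.2]
  -- differentiability facts
  have hGdiff : Differentiable ℝ G := hG.differentiable (by norm_num)
  have hF : ContDiff ℝ 1 (fderiv ℝ G) := hG.fderiv_right (by norm_num)
  have hFdiff : Differentiable ℝ (fderiv ℝ G) := hF.differentiable (by norm_num)
  have hcderiv : ∀ t : ℝ, HasDerivAt c h t := by
    intro t
    have := ((hasDerivAt_id t).smul_const h).const_add x
    simpa [hcdef] using this
  have hφ' : ∀ t : ℝ, HasDerivAt φ (fderiv ℝ G (c t) h) t := fun t =>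
    (hGdiff (c t)).hasFDerivAt.comp_hasDerivAt t (hcderiv t)
  have hderivφ : deriv φ = fun t => fderiv ℝ G (c t) h :=
    funext fun t => (hφ' t).deriv
  have hφ'' : ∀ t : ℝ, HasDerivAt (deriv φ)
      (fderiv ℝ (fderiv ℝ G) (c t) h h) t := by
    intro t
    rw [hderivφ]
    have h1 : HasDerivAt (fun s => fderiv ℝ G (c s))
        (fderiv ℝ (fderiv ℝ G) (c t) h) t :=
      (hFdiff (c t)).hasFDerivAt.comp_hasDerivAt t (hcderiv t)
    have := h1.clm_apply (hasDerivAt_const t h)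
    simpa using this
  -- φ is C²
  have hcC : ContDiff ℝ 2 c := contDiff_const.add (contDiff_id.smul contDiff_const)
  have hφC2 : ContDiff ℝ 2 φ := hG.comp hcC
  -- Taylor's theorem
  obtain ⟨t', ht', htaylor⟩ := taylor_mean_remainder_lagrange (f := φ) (n := 1) (x₀ := 0) (x := 1)
    zero_ne_one (by rw [uIcc_of_le zero_le_one]; exact hφC2.contDiffOn.of_le (by norm_num))
    (by
      rw [uIcc_of_le zero_le_one, uIoo_of_le zero_le_one]
      intro y hy
      have heq : EqOn (iteratedDerivWithin 1 φ (Icc 0 1)) (deriv φ) (Ioo 0 1) := by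
        intro z hz
        rw [iterWithin_eq_aux _ _ hz, iteratedDeriv_one]
      exact (((hφ'' y).differentiableAt).congr_of_eventuallyEq
        (Filter.eventuallyEq_of_mem (isOpen_Ioo.mem_nhds hy) heq)
        ).differentiableWithinAt)
  rw [uIoo_of_le zero_le_one] at ht'
  rw [uIcc_of_le zero_le_one] at htaylor
  -- identify the Taylor polynomial
  have hUD : UniqueDiffWithinAt ℝ (Icc (0:ℝ) 1) 0 :=
    (uniqueDiffOn_Icc zero_lt_one) 0 (left_mem_Icc.2 zero_le_one)
  have hpoly : taylorWithinEval φ 1 (Icc 0 1) 0 1 = φ 0 + deriv φ 0 := by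
    have h1 : iteratedDerivWithin 1 φ (Icc (0:ℝ) 1) 0 = deriv φ 0 := by
      rw [iteratedDerivWithin_one]
      exact (hφ' 0).differentiableAt.derivWithin hUD
    rw [taylor_within_apply]
    simp [Finset.sum_range_succ, h1, iteratedDerivWithin_zero]
  -- identify the second derivative term
  have h2nd : iteratedDerivWithin 2 φ (Icc (0:ℝ) 1) t' =
      fderiv ℝ (fderiv ℝ G) (c t') h h := by
    rw [iterWithin_eq_aux _ _ ht', iteratedDeriv_succ, iteratedDeriv_one]
    exact (hφ'' t').deriv
  -- bound the second derivative term
  have hbound : |fderiv ℝ (fderiv ℝ G) (c t') h h| ≤ K * r ^ 2 := by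
    have hball : c t' ∈ ball x (2 * r) :=
      hcball t' ⟨ht'.1.le, ht'.2.le⟩
    have heq : fderiv ℝ (fderiv ℝ G) (c t') h h =
        iteratedFDeriv ℝ 2 G (c t') ![h, h] := by
      rw [iteratedFDeriv_two_apply]
      simp
    rw [heq, ← Real.norm_eq_abs]
    calc ‖iteratedFDeriv ℝ 2 G (c t') ![h, h]‖
        ≤ ‖iteratedFDeriv ℝ 2 G (c t')‖ * ∏ i, ‖(![h, h] : Fin 2 → EuclideanSpace ℝ (Fin n)) i‖ :=
          (iteratedFDeriv ℝ 2 G (c t')).le_opNorm _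
      _ = ‖iteratedFDeriv ℝ 2 G (c t')‖ * (r * r) := by
          rw [Fin.prod_univ_two]
          simp [hnormh]
      _ ≤ K * (r * r) := by
          apply mul_le_mul_of_nonneg_right (hK _ hball)
          positivity
      _ = K * r ^ 2 := by ring
  -- compute deriv φ 0 = -r * ‖g‖
  have hd0 : deriv φ 0 = -(r * ‖g‖) := by
    rw [hderivφ]
    simp only [hc0]
    have hfd : fderiv ℝ G x h = inner ℝ g h := by
      rw [hgdef, gradient]
      rw [← InnerProductSpace.toDual_apply_apply,
        LinearIsometryEquiv.apply_symm_apply]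
    rw [hfd, hhdef, real_inner_smul_right, real_inner_smul_right,
      real_inner_self_eq_norm_mul_norm]
    field_simp
  -- put it together
  have key : φ 1 - (φ 0 + deriv φ 0) =
      fderiv ℝ (fderiv ℝ G) (c t') h h * 1 ^ 2 / 2 := by
    rw [← hpoly, htaylor, h2nd]
    norm_num
  have hφ1 : 0 ≤ φ 1 := hGnn _
  have hφ0 : φ 0 = G x := by show G (c 0) = G x; rw [hc0]
  have habs := abs_le.1 hbound
  have hfinal : r * ‖g‖ ≤ G x + K * r ^ 2 / 2 := by
    have := key
    rw [hd0, hφ0] at this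
    nlinarith [habs.1, habs.2]
  -- conclude
  nlinarith [mul_le_mul_of_nonneg_right hbig hrpos.le, norm_nonneg g,
    mul_le_mul_of_nonneg_left hr (norm_nonneg g)]
end

section
/- Let u' (r) = C₀ exp(∫_{R₀}^{r} g(t)/t dt) with g as above satisfying |g(t)-a| ≤ C(t^{-2α}+t^{-1-α}) for some a ∈ (-1,0), and define u(r) = ∫_{R₀}^{r} u'(s) ds. Then lim_{r→∞} u(r)/r^{1+a} exists, is positive and finite, and equals (C₀ R₀^{-a}/(1+a)) · exp(∫_{R₀}^{∞} (g(t)-a)/t dt). -/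
open Real Set Filter MeasureTheory intervalIntegral Topology

private lemma cesaro_aux {f : ℝ → ℝ} (hf : Continuous f) {a R₀ L : ℝ} (ha : -1 < a)
    (hR₀ : 0 < R₀)
    (hlim : Tendsto (fun s => f s / s ^ a) atTop (𝓝 L)) :
    Tendsto (fun r => (∫ s in R₀..r, f s) / r ^ (1 + a)) atTop (𝓝 (L / (1 + a))) := by
  have hb : 0 < 1 + a := by linarith
  rw [Metric.tendsto_atTop]
  intro ε hε
  have hε' : 0 < ε * (1 + a) / 4 := by positivity
  set ε' := ε * (1 + a) / 4 with hε'def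
  obtain ⟨N₁, hN₁⟩ := (Metric.tendsto_atTop.1 hlim) ε' hε'
  set R₁ := max N₁ (max R₀ 1) with hR₁def
  have hR₁1 : (1:ℝ) ≤ R₁ := le_trans (le_max_right _ _) (le_max_right _ _)
  have hR₁0 : 0 < R₁ := lt_of_lt_of_le one_pos hR₁1
  have hR₀R₁ : R₀ ≤ R₁ := le_trans (le_max_left _ _) (le_max_right _ _)
  have key : ∀ s, R₁ ≤ s → |f s - L * s ^ a| ≤ ε' * s ^ a := by
    intro s hs
    have hs0 : 0 < s := lt_of_lt_of_le hR₁0 hs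
    have hsa : 0 < s ^ a := Real.rpow_pos_of_pos hs0 a
    have h1 := hN₁ s (le_trans (le_max_left _ _) hs)
    rw [Real.dist_eq] at h1
    have heq : f s - L * s ^ a = (f s / s ^ a - L) * s ^ a := by
      field_simp
    rw [heq, abs_mul, abs_of_pos hsa]
    exact mul_le_mul_of_nonneg_right h1.le hsa.le
  set K := (∫ s in R₀..R₁, f s) - L * R₁ ^ (1 + a) / (1 + a) with hK
  obtain ⟨N₂, hN₂⟩ := eventually_atTop.1
    ((tendsto_rpow_atTop hb).eventually_ge_atTop (2 * |K| / ε))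
  refine ⟨max R₁ N₂, fun r hr => ?_⟩
  have hrR₁ : R₁ ≤ r := le_trans (le_max_left _ _) hr
  have hr0 : 0 < r := lt_of_lt_of_le hR₁0 hrR₁
  have hrb : 0 < r ^ (1 + a) := Real.rpow_pos_of_pos hr0 _
  have hint1 : IntervalIntegrable f volume R₀ R₁ := hf.intervalIntegrable _ _
  have hint2 : IntervalIntegrable f volume R₁ r := hf.intervalIntegrable _ _
  have hca : ContinuousOn (fun s : ℝ => s ^ a) (uIcc R₁ r) := by
    apply ContinuousOn.rpow_const continuousOn_id
    intro x hx
    rw [uIcc_of_le hrR₁] at hx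
    exact Or.inl (ne_of_gt (lt_of_lt_of_le hR₁0 hx.1))
  have hcLa : ContinuousOn (fun s : ℝ => L * s ^ a) (uIcc R₁ r) :=
    continuousOn_const.mul hca
  have hsubint : IntervalIntegrable (fun s => f s - L * s ^ a) volume R₁ r :=
    hint2.sub hcLa.intervalIntegrable
  have hLaint : IntervalIntegrable (fun s : ℝ => L * s ^ a) volume R₁ r :=
    hcLa.intervalIntegrable
  have hε'aint : IntervalIntegrable (fun s : ℝ => ε' * s ^ a) volume R₁ r :=
    (continuousOn_const.mul hca).intervalIntegrable
  have hpow : ∫ s in R₁..r, s ^ a = (r ^ (1 + a) - R₁ ^ (1 + a)) / (1 + a) := by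
    rw [integral_rpow (Or.inl ha), add_comm a 1]
  have habs : |∫ s in R₁..r, (f s - L * s ^ a)| ≤ ε' * ((r ^ (1+a) - R₁ ^ (1+a)) / (1+a)) := by
    calc |∫ s in R₁..r, (f s - L * s ^ a)| ≤ ∫ s in R₁..r, |f s - L * s ^ a| :=
          intervalIntegral.abs_integral_le_integral_abs hrR₁
      _ ≤ ∫ s in R₁..r, ε' * s ^ a := by
          apply intervalIntegral.integral_mono_on hrR₁ hsubint.abs hε'aint
          intro s hs
          exact key s hs.1
      _ = ε' * ((r ^ (1+a) - R₁ ^ (1+a)) / (1+a)) := by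
          rw [intervalIntegral.integral_const_mul, hpow]
  have hdecomp : ∫ s in R₁..r, f s
      = (∫ s in R₁..r, (f s - L * s ^ a)) + L * ((r ^ (1+a) - R₁ ^ (1+a)) / (1+a)) := by
    have h1 : ∫ s in R₁..r, f s = ∫ s in R₁..r, ((f s - L * s ^ a) + L * s ^ a) := by
      congr 1; funext s; ring
    rw [h1, intervalIntegral.integral_add hsubint hLaint,
      intervalIntegral.integral_const_mul, hpow]
  have hsplit : ∫ s in R₀..r, f s = (∫ s in R₀..R₁, f s) + ∫ s in R₁..r, f s :=
    (intervalIntegral.integral_add_adjacent_intervals hint1 hint2).symm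
  have hmain : (∫ s in R₀..r, f s) - L * r ^ (1+a) / (1+a)
      = K + ∫ s in R₁..r, (f s - L * s ^ a) := by
    rw [hsplit, hdecomp, hK]; ring
  have hE : |∫ s in R₁..r, (f s - L * s ^ a)| ≤ ε' * r ^ (1+a) / (1+a) := by
    refine habs.trans ?_
    rw [mul_div_assoc]
    apply mul_le_mul_of_nonneg_left _ hε'.le
    apply div_le_div_of_nonneg_right _ hb.le
    · have : 0 ≤ R₁ ^ (1+a) := Real.rpow_nonneg hR₁0.le _
      linarith
  have hdisteq : (∫ s in R₀..r, f s) / r ^ (1+a) - L / (1+a)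
      = ((∫ s in R₀..r, f s) - L * r ^ (1+a) / (1+a)) / r ^ (1+a) := by
    field_simp
  rw [Real.dist_eq, hdisteq, hmain]
  have h2 : |K + ∫ s in R₁..r, (f s - L * s ^ a)| ≤ |K| + ε' * r ^ (1+a) / (1+a) :=
    (abs_add_le _ _).trans (by linarith)
  have h3 : |(K + ∫ s in R₁..r, (f s - L * s ^ a)) / r ^ (1+a)|
      ≤ (|K| + ε' * r ^ (1+a) / (1+a)) / r ^ (1+a) := by
    rw [abs_div, abs_of_pos hrb]
    exact div_le_div_of_nonneg_right h2 hrb.le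
  refine lt_of_le_of_lt h3 ?_
  have hKr : |K| / r ^ (1+a) ≤ ε / 2 := by
    have hr2 : 2 * |K| / ε ≤ r ^ (1+a) := hN₂ r (le_trans (le_max_right _ _) hr)
    rw [div_le_iff₀ hrb]
    rw [div_le_iff₀ hε] at hr2
    linarith
  have heps : ε' * r ^ (1+a) / (1+a) / r ^ (1+a) = ε / 4 := by
    rw [hε'def]; field_simp
  rw [add_div]
  rw [heps]
  have := div_le_div_of_nonneg_right (le_refl (|K| : ℝ)) hrb.le
  linarith [hKr]

theorem stmt_9 (R₀ C₀ Λ a C α : ℝ) (hR₀ : 0 < R₀) (hC₀ : 0 < C₀)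
    (hΛ0 : 0 < Λ) (hΛ1 : Λ < 1) (ha1 : -1 < a) (ha0 : a < 0)
    (hC : 0 < C) (hα : 0 < α)
    (g : ℝ → ℝ) (hg : ContinuousOn g (Ici R₀))
    (hgl : ∀ t ≥ R₀, -(Λ⁻¹ * (1 + C₀ ^ 2)) ≤ g t)
    (hgu : ∀ t ≥ R₀, g t ≤ -Λ)
    (hdecay : ∀ t ≥ R₀, |g t - a| ≤ C * (t ^ (-(2 * α)) + t ^ (-1 - α))) :
    0 < C₀ * R₀ ^ (-a) / (1 + a) *
        Real.exp (∫ t in Ici R₀, (g t - a) / t) ∧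
    Tendsto
      (fun r => (∫ s in R₀..r, C₀ * Real.exp (∫ t in R₀..s, g t / t)) /
        r ^ (1 + a)) atTop
      (nhds (C₀ * R₀ ^ (-a) / (1 + a) *
        Real.exp (∫ t in Ici R₀, (g t - a) / t))) := by
  have hb : 0 < 1 + a := by linarith
  -- modified functions
  set m : ℝ → ℝ := fun t => max t R₀ with hm
  have hmcont : Continuous m := continuous_id.max continuous_const
  have hmpos : ∀ t, 0 < m t := fun t => lt_of_lt_of_le hR₀ (le_max_right t R₀)
  have hg'cont : Continuous (fun t => g (m t)) :=
    hg.comp_continuous hmcont (fun x => mem_Ici.mpr (le_max_right x R₀))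
  set φ : ℝ → ℝ := fun t => g (m t) / m t with hφ
  set ψ : ℝ → ℝ := fun t => (g (m t) - a) / m t with hψ
  have hφcont : Continuous φ :=
    hg'cont.div hmcont (fun t => (hmpos t).ne')
  have hψcont : Continuous ψ :=
    (hg'cont.sub continuous_const).div hmcont (fun t => (hmpos t).ne')
  have hmeq : ∀ t, R₀ ≤ t → m t = t := fun t ht => max_eq_left ht
  -- integrability of ψ on Ioi R₀
  have hexp1 : -(1 + 2*α) < -1 := by linarith
  have hexp2 : -2 - α < -1 := by linarith
  have hDint : IntegrableOn (fun t : ℝ => C * (t ^ (-(1+2*α)) + t ^ (-2-α))) (Ioi R₀) :=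
    ((integrableOn_Ioi_rpow_of_lt hexp1 hR₀).add
      (integrableOn_Ioi_rpow_of_lt hexp2 hR₀)).const_mul C
  have hψint : IntegrableOn ψ (Ioi R₀) := by
    apply hDint.mono' (hψcont.aestronglyMeasurable.restrict)
    rw [ae_restrict_iff' measurableSet_Ioi]
    filter_upwards with t ht
    have ht0 : 0 < t := lt_trans hR₀ ht
    have hmt : m t = t := hmeq t ht.le
    have e1 : t ^ (-(2*α)) / t = t ^ (-(1+2*α)) := by
      rw [show (-(2*α):ℝ) = -(1+2*α) + 1 by ring, Real.rpow_add ht0, Real.rpow_one,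
        mul_div_assoc, div_self ht0.ne', mul_one]
    have e2 : t ^ (-1-α) / t = t ^ (-2-α) := by
      rw [show (-1-α:ℝ) = -2-α + 1 by ring, Real.rpow_add ht0, Real.rpow_one,
        mul_div_assoc, div_self ht0.ne', mul_one]
    calc ‖ψ t‖ = |g t - a| / t := by
          rw [Real.norm_eq_abs, hψ]; simp only [hmt]
          rw [abs_div, abs_of_pos ht0]
      _ ≤ (C * (t ^ (-(2*α)) + t ^ (-1-α))) / t := by
          apply div_le_div_of_nonneg_right (hdecay t ht.le) ht0.le
      _ = C * (t ^ (-(1+2*α)) + t ^ (-2-α)) := by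
          rw [mul_div_assoc, add_div, e1, e2]
  set I₀ : ℝ := ∫ t in Ioi R₀, ψ t with hI₀
  have hFψ : Tendsto (fun s => ∫ t in R₀..s, ψ t) atTop (𝓝 I₀) :=
    intervalIntegral_tendsto_integral_Ioi R₀ hψint tendsto_id
  have hIeq : (∫ t in Ici R₀, (g t - a) / t) = I₀ := by
    rw [hI₀, integral_Ici_eq_integral_Ioi]
    apply setIntegral_congr_fun measurableSet_Ioi
    intro t ht
    simp only [hψ, hmeq t (le_of_lt ht)]
  set u' : ℝ → ℝ := fun s => C₀ * Real.exp (∫ t in R₀..s, φ t) with hu'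
  have hu'cont : Continuous u' :=
    continuous_const.mul (Real.continuous_exp.comp
      (intervalIntegral.continuous_primitive (fun a b => hφcont.intervalIntegrable a b) R₀))
  set L' : ℝ := C₀ * Real.exp I₀ * R₀ ^ (-a) with hL'
  have hu'lim : Tendsto (fun s => u' s / s ^ a) atTop (𝓝 L') := by
    have h1 : Tendsto (fun s => C₀ * Real.exp (∫ t in R₀..s, ψ t) * R₀ ^ (-a)) atTop (𝓝 L') :=
      (((Real.continuous_exp.tendsto I₀).comp hFψ).const_mul C₀).mul_const _
    apply h1.congr'
    filter_upwards [eventually_ge_atTop (max R₀ 1)] with s hs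
    have hsR₀ : R₀ ≤ s := le_trans (le_max_left _ _) hs
    have hs0 : 0 < s := lt_of_lt_of_le (lt_of_lt_of_le one_pos (le_max_right _ _)) hs
    have hadd : ∫ t in R₀..s, φ t
        = (∫ t in R₀..s, ψ t) + ∫ t in R₀..s, a / m t := by
      have hamcont : Continuous (fun t : ℝ => a / m t) :=
        Continuous.div continuous_const hmcont (fun t => (hmpos t).ne')
      rw [← intervalIntegral.integral_add (hψcont.intervalIntegrable _ _)
        (hamcont.intervalIntegrable _ _)]
      apply intervalIntegral.integral_congr
      intro t _
      rw [hφ, hψ]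
      simp only
      rw [← add_div, sub_add_cancel]
    have hlog : ∫ t in R₀..s, a / m t = a * (Real.log s - Real.log R₀) := by
      have h2 : ∫ t in R₀..s, a / m t = ∫ t in R₀..s, a * t⁻¹ := by
        apply intervalIntegral.integral_congr
        intro t ht
        rw [uIcc_of_le hsR₀] at ht
        show a / m t = a * t⁻¹
        rw [hmeq t ht.1, div_eq_mul_inv]
      rw [h2, intervalIntegral.integral_const_mul, integral_inv_of_pos hR₀ hs0,
        Real.log_div hs0.ne' hR₀.ne']
    have hsa : (0:ℝ) < s ^ a := Real.rpow_pos_of_pos hs0 a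
    have hexp : Real.exp (∫ t in R₀..s, φ t)
        = Real.exp (∫ t in R₀..s, ψ t) * s ^ a * R₀ ^ (-a) := by
      rw [hadd, hlog, Real.rpow_def_of_pos hs0, Real.rpow_def_of_pos hR₀,
        ← Real.exp_add, ← Real.exp_add]
      congr 1
      ring
    rw [hu']
    simp only
    rw [hexp]
    field_simp
  have hces := cesaro_aux hu'cont ha1 hR₀ hu'lim
  have hval : C₀ * R₀ ^ (-a) / (1 + a) * Real.exp (∫ t in Ici R₀, (g t - a) / t)
      = L' / (1 + a) := by
    rw [hIeq, hL']; ring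
  constructor
  · rw [hval, hL']
    positivity
  · rw [hval]
    apply hces.congr'
    filter_upwards [eventually_ge_atTop R₀] with r hrR₀
    congr 1
    apply intervalIntegral.integral_congr
    intro s hs
    rw [uIcc_of_le hrR₀] at hs
    show C₀ * Real.exp (∫ t in R₀..s, φ t) = C₀ * Real.exp (∫ t in R₀..s, g t / t)
    have hin : (∫ t in R₀..s, φ t) = ∫ t in R₀..s, g t / t := by
      apply intervalIntegral.integral_congr
      intro t ht
      rw [uIcc_of_le hs.1] at ht
      show g (m t) / m t = g t / t
      rw [hmeq t ht.1]
    rw [hin]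
end

section
/- Let a^{ij} be measurable uniformly elliptic coefficients on {|x| ≥ r₀} ⊂ ℝ² satisfying |a^{ij}(x) - δ^{ij}| ≤ C₁|x|^{-1}, and let a^i satisfy |a^i(x)| ≤ C₂|x|^{-2}. Then there exists r₀' ≥ max(r₀, 3) such that w(x) = log log |x| satisfies a^{ij}(x) w_{ij}(x) + a^i(x) w_i(x) ≤ 0 for all |x| ≥ r₀', i.e., w is a supersolution of the operator a^{ij}∂_{ij} + a^i∂_i outside a large ball. -/
open Real Set Filter

noncomputable def pd11 (w : EuclideanSpace ℝ (Fin 2) → ℝ) (i : Fin 2)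
    (x : EuclideanSpace ℝ (Fin 2)) : ℝ :=
  fderiv ℝ w x (EuclideanSpace.single i 1)

section Aux

abbrev E2' := EuclideanSpace ℝ (Fin 2)

noncomputable def gg (y : E2') : ℝ := (y 0)^2 + (y 1)^2

noncomputable def DD (x : E2') : E2' →L[ℝ] ℝ :=
  (2 * x 0) • EuclideanSpace.proj (0:Fin 2) + (2 * x 1) • EuclideanSpace.proj (1:Fin 2)

lemma DD_apply (x : E2') (j : Fin 2) : DD x (EuclideanSpace.single j 1) = 2 * x j := by
  fin_cases j <;> simp [DD, EuclideanSpace.single_apply]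

lemma gg_eq (y : E2') : gg y = ‖y‖^2 := by
  rw [EuclideanSpace.norm_eq, Real.sq_sqrt (by positivity)]
  simp [gg, Fin.sum_univ_two]

lemma hasFDerivAt_gg (x : E2') : HasFDerivAt gg (DD x) x := by
  have h0 : HasFDerivAt (fun y : E2' => (y 0)^2)
      ((2 * x 0) • (EuclideanSpace.proj (0:Fin 2) : E2' →L[ℝ] ℝ)) x := by
    simpa [pow_one, mul_comm, Function.comp_def] using ((hasDerivAt_pow 2 (x 0)).comp_hasFDerivAt x
      (EuclideanSpace.proj (0:Fin 2) : E2' →L[ℝ] ℝ).hasFDerivAt)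
  have h1 : HasFDerivAt (fun y : E2' => (y 1)^2)
      ((2 * x 1) • (EuclideanSpace.proj (1:Fin 2) : E2' →L[ℝ] ℝ)) x := by
    simpa [pow_one, mul_comm, Function.comp_def] using ((hasDerivAt_pow 2 (x 1)).comp_hasFDerivAt x
      (EuclideanSpace.proj (1:Fin 2) : E2' →L[ℝ] ℝ).hasFDerivAt)
  exact h0.add h1

lemma gg_pos_one (x : E2') (hx : 1 < ‖x‖) : 1 < gg x := by
  rw [gg_eq]; nlinarith

lemma hasFDerivAt_F (x : E2') (hx : 1 < ‖x‖) :
    HasFDerivAt (fun y => Real.log (Real.log (gg y)))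
      ((Real.log (gg x))⁻¹ • (gg x)⁻¹ • DD x) x := by
  have h1 : (1:ℝ) < gg x := gg_pos_one x hx
  have hg0 : gg x ≠ 0 := by linarith
  have hL : Real.log (gg x) ≠ 0 := ne_of_gt (Real.log_pos h1)
  have hlog1 : HasFDerivAt (fun y => Real.log (gg y)) ((gg x)⁻¹ • DD x) x := by
    simpa [Function.comp_def] using (Real.hasDerivAt_log hg0).comp_hasFDerivAt x (hasFDerivAt_gg x)
  simpa [Function.comp_def] using (Real.hasDerivAt_log hL).comp_hasFDerivAt x hlog1

lemma isOpen_big : IsOpen {y : E2' | 1 < ‖y‖} := isOpen_lt continuous_const continuous_norm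

lemma f_eq_F (y : E2') (hy : 1 < ‖y‖) :
    Real.log (Real.log ‖y‖) = Real.log (Real.log (gg y)) - Real.log 2 := by
  have h1 : (0:ℝ) < Real.log ‖y‖ := Real.log_pos hy
  have h2 : Real.log (gg y) = 2 * Real.log ‖y‖ := by
    rw [gg_eq, Real.log_pow]; ring
  rw [h2, mul_comm, Real.log_mul (ne_of_gt h1) two_ne_zero]; ring

lemma pd1_eq (x : E2') (hx : 1 < ‖x‖) (j : Fin 2) :
    pd11 (fun y => Real.log (Real.log ‖y‖)) j x = 2 * x j / (gg x * Real.log (gg x)) := by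
  have hev : (fun y : E2' => Real.log (Real.log ‖y‖)) =ᶠ[nhds x]
      (fun y => Real.log (Real.log (gg y)) - Real.log 2) := by
    filter_upwards [isOpen_big.mem_nhds hx] with y hy using f_eq_F y hy
  have hF := (hasFDerivAt_F x hx).sub_const (Real.log 2)
  have h' : HasFDerivAt (fun y : E2' => Real.log (Real.log ‖y‖))
      ((Real.log (gg x))⁻¹ • (gg x)⁻¹ • DD x) x := hF.congr_of_eventuallyEq hev
  have h1 : (1:ℝ) < gg x := gg_pos_one x hx
  rw [pd11, h'.fderiv]
  simp [DD_apply]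
  field_simp

lemma pd2_eq (x : E2') (hx : 1 < ‖x‖) (i j : Fin 2) :
    pd11 (pd11 (fun y => Real.log (Real.log ‖y‖)) j) i x =
      (if i = j then 2 else 0) / (gg x * Real.log (gg x)) -
        4 * x i * x j * (Real.log (gg x) + 1) / (gg x * Real.log (gg x)) ^ 2 := by
  have h1 : (1:ℝ) < gg x := gg_pos_one x hx
  have hg0 : gg x ≠ 0 := by linarith
  have hL0 : (0:ℝ) < Real.log (gg x) := Real.log_pos h1
  have hL : Real.log (gg x) ≠ 0 := ne_of_gt hL0
  have hφ : HasFDerivAt (fun y => gg y * Real.log (gg y))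
      (gg x • ((gg x)⁻¹ • DD x) + Real.log (gg x) • DD x) x := by
    have hlog : HasFDerivAt (fun y => Real.log (gg y)) ((gg x)⁻¹ • DD x) x := by
      simpa [Function.comp_def] using (Real.hasDerivAt_log hg0).comp_hasFDerivAt x (hasFDerivAt_gg x)
    exact (hasFDerivAt_gg x).mul hlog
  have hinv := (hasDerivAt_inv (mul_ne_zero hg0 hL)).comp_hasFDerivAt x hφ
  have hnum : HasFDerivAt (fun y : E2' => 2 * y j)
      ((2:ℝ) • (EuclideanSpace.proj j : E2' →L[ℝ] ℝ)) x :=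
    ((EuclideanSpace.proj j : E2' →L[ℝ] ℝ).hasFDerivAt).const_smul (2:ℝ) |>.congr_of_eventuallyEq
      (by filter_upwards with y; simp [smul_eq_mul])
  have hprod := hnum.mul hinv
  have hhh := hprod.congr_of_eventuallyEq
    (f₁ := fun y : E2' => 2 * y j / (gg y * Real.log (gg y)))
    (Filter.Eventually.of_forall fun y => by simp [div_eq_mul_inv, Function.comp])
  have hev : pd11 (fun y => Real.log (Real.log ‖y‖)) j =ᶠ[nhds x]
      (fun y : E2' => 2 * y j / (gg y * Real.log (gg y))) := by
    filter_upwards [isOpen_big.mem_nhds hx] with y hy using pd1_eq y hy j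
  rw [pd11, hev.fderiv_eq, hhh.fderiv]
  simp [DD_apply, EuclideanSpace.single_apply, mul_inv_cancel₀ hg0]
  by_cases hij : i = j
  · subst hij; simp; field_simp; ring
  · simp [hij, Ne.symm hij]; field_simp; ring

end Aux

set_option maxHeartbeats 8000000 in
lemma key_ineq (r L C₁ C₂ x0 x1 A00 A01 A10 A11 B0 B1 : ℝ)
    (hr3 : 3 ≤ r) (hL2 : 2 ≤ L)
    (hC₁ : 0 < C₁) (hC₂ : 0 < C₂)
    (hsum : x0^2 + x1^2 = r^2)
    (hKL : (8*C₁+C₂) * L ≤ r)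
    (e00 : |A00 - 1| ≤ C₁ * r⁻¹) (e01 : |A01| ≤ C₁ * r⁻¹)
    (e10 : |A10| ≤ C₁ * r⁻¹) (e11 : |A11 - 1| ≤ C₁ * r⁻¹)
    (f0 : |B0| ≤ C₂ * (r^2)⁻¹) (f1 : |B1| ≤ C₂ * (r^2)⁻¹) :
    A00 * (2/(r^2*L) - 4*x0*x0*(L+1)/(r^2*L)^2) +
    A01 * (0/(r^2*L) - 4*x0*x1*(L+1)/(r^2*L)^2) +
    (A10 * (0/(r^2*L) - 4*x1*x0*(L+1)/(r^2*L)^2) +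
    A11 * (2/(r^2*L) - 4*x1*x1*(L+1)/(r^2*L)^2)) +
    (B0 * (2*x0/(r^2*L)) + B1 * (2*x1/(r^2*L))) ≤ 0 := by
  have hrp : (0:ℝ) < r := by linarith
  have hLpos : (0:ℝ) < L := by linarith
  have hx0sq : x0 ^ 2 ≤ r ^ 2 := by nlinarith [sq_nonneg x1]
  have hx1sq : x1 ^ 2 ≤ r ^ 2 := by nlinarith [sq_nonneg x0]
  have hr2L : (0:ℝ) ≤ r^2 * (L - 2) := mul_nonneg (sq_nonneg r) (by linarith)
  have hr2Lp : (0:ℝ) < r^2 * L := by positivity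
  have h4a := mul_le_mul_of_nonneg_right hx0sq (by linarith : (0:ℝ) ≤ 4*(L+1))
  have h4b := mul_le_mul_of_nonneg_right hx1sq (by linarith : (0:ℝ) ≤ 4*(L+1))
  have habs00 : |2 * r^2 * L - 4 * x0^2 * (L+1)| ≤ 8 * r^2 * L := by
    rw [abs_le]
    constructor <;> nlinarith [h4a, hr2L, mul_nonneg (sq_nonneg x0) hLpos.le, sq_nonneg x0]
  have habs11 : |2 * r^2 * L - 4 * x1^2 * (L+1)| ≤ 8 * r^2 * L := by
    rw [abs_le]
    constructor <;> nlinarith [h4b, hr2L, mul_nonneg (sq_nonneg x1) hLpos.le, sq_nonneg x1]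
  have hub : 2*x0*x1 ≤ r^2 := by nlinarith [sq_nonneg (x0 - x1)]
  have hlb : -(r^2) ≤ 2*x0*x1 := by nlinarith [sq_nonneg (x0 + x1)]
  have hub' := mul_le_mul_of_nonneg_right hub (by linarith : (0:ℝ) ≤ L+1)
  have hlb' := mul_le_mul_of_nonneg_right hlb (by linarith : (0:ℝ) ≤ L+1)
  have habs01 : |(-(4 * x0 * x1 * (L+1)))| ≤ 8 * r^2 * L := by
    rw [abs_le]; constructor <;> nlinarith [hub', hlb', hr2L]
  have habs10 : |(-(4 * x1 * x0 * (L+1)))| ≤ 8 * r^2 * L := by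
    rw [abs_le]; constructor <;> nlinarith [hub', hlb', hr2L]
  have hx0r : |x0| ≤ r := by
    rw [abs_le]; constructor <;> nlinarith [sq_nonneg (x0 + r), sq_nonneg (x0 - r)]
  have hx1r : |x1| ≤ r := by
    rw [abs_le]; constructor <;> nlinarith [sq_nonneg (x1 + r), sq_nonneg (x1 - r)]
  have hm0u := mul_le_mul_of_nonneg_right (abs_le.mp hx0r).2 (by positivity : (0:ℝ) ≤ 2*r^2*L)
  have hm0l := mul_le_mul_of_nonneg_right (abs_le.mp hx0r).1 (by positivity : (0:ℝ) ≤ 2*r^2*L)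
  have hm1u := mul_le_mul_of_nonneg_right (abs_le.mp hx1r).2 (by positivity : (0:ℝ) ≤ 2*r^2*L)
  have hm1l := mul_le_mul_of_nonneg_right (abs_le.mp hx1r).1 (by positivity : (0:ℝ) ≤ 2*r^2*L)
  have habsb0 : |2 * x0 * r^2 * L| ≤ 2 * r^3 * L := by
    rw [abs_le]; constructor <;> nlinarith [hm0u, hm0l]
  have habsb1 : |2 * x1 * r^2 * L| ≤ 2 * r^3 * L := by
    rw [abs_le]; constructor <;> nlinarith [hm1u, hm1l]
  have bound : ∀ (c s Cb M : ℝ), |c| ≤ Cb → |s| ≤ M → 0 ≤ Cb → c * s ≤ Cb * M := by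
    intro c s Cb M hc hs hCb
    calc c * s ≤ |c * s| := le_abs_self _
    _ = |c| * |s| := abs_mul _ _
    _ ≤ Cb * M := mul_le_mul hc hs (abs_nonneg _) hCb
  have d00 := bound _ _ _ _ e00 habs00 (by positivity)
  have d01 := bound _ _ _ _ e01 habs01 (by positivity)
  have d10 := bound _ _ _ _ e10 habs10 (by positivity)
  have d11 := bound _ _ _ _ e11 habs11 (by positivity)
  have db0 := bound _ _ _ _ f0 habsb0 (by positivity)
  have db1 := bound _ _ _ _ f1 habsb1 (by positivity)
  have hterm : C₁ * r⁻¹ * (8 * r^2 * L) = 8 * C₁ * r * L := by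
    field_simp
  have htermb : C₂ * (r^2)⁻¹ * (2 * r^3 * L) = 2 * C₂ * r * L := by
    field_simp
  rw [hterm] at d00 d01 d10 d11
  rw [htermb] at db0 db1
  have hfin : 32 * C₁ * r * L + 4 * C₂ * r * L ≤ 4 * r^2 := by
    have h := mul_le_mul_of_nonneg_left hKL (by linarith : (0:ℝ) ≤ 4 * r)
    nlinarith [h]
  have hP : A00 * (2 * r^2 * L - 4 * x0^2 * (L+1)) + A01 * (-(4 * x0 * x1 * (L+1)))
      + A10 * (-(4 * x1 * x0 * (L+1))) + A11 * (2 * r^2 * L - 4 * x1^2 * (L+1))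
      + B0 * (2 * x0 * r^2 * L) + B1 * (2 * x1 * r^2 * L) ≤ 0 := by
    have hid : A00 * (2 * r^2 * L - 4 * x0^2 * (L+1)) + A01 * (-(4 * x0 * x1 * (L+1)))
        + A10 * (-(4 * x1 * x0 * (L+1))) + A11 * (2 * r^2 * L - 4 * x1^2 * (L+1))
        + B0 * (2 * x0 * r^2 * L) + B1 * (2 * x1 * r^2 * L)
        = (-(4 * r^2))
        + (A00 - 1) * (2 * r^2 * L - 4 * x0^2 * (L+1))
        + A01 * (-(4 * x0 * x1 * (L+1)))
        + A10 * (-(4 * x1 * x0 * (L+1)))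
        + (A11 - 1) * (2 * r^2 * L - 4 * x1^2 * (L+1))
        + B0 * (2 * x0 * r^2 * L) + B1 * (2 * x1 * r^2 * L) := by
      linear_combination (-4 * (L + 1)) * hsum
    rw [hid]; linarith
  have hform : A00 * (2/(r^2*L) - 4*x0*x0*(L+1)/(r^2*L)^2) +
      A01 * (0/(r^2*L) - 4*x0*x1*(L+1)/(r^2*L)^2) +
      (A10 * (0/(r^2*L) - 4*x1*x0*(L+1)/(r^2*L)^2) +
      A11 * (2/(r^2*L) - 4*x1*x1*(L+1)/(r^2*L)^2)) +
      (B0 * (2*x0/(r^2*L)) + B1 * (2*x1/(r^2*L)))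
      = (A00 * (2 * r^2 * L - 4 * x0^2 * (L+1)) + A01 * (-(4 * x0 * x1 * (L+1)))
        + A10 * (-(4 * x1 * x0 * (L+1))) + A11 * (2 * r^2 * L - 4 * x1^2 * (L+1))
        + B0 * (2 * x0 * r^2 * L) + B1 * (2 * x1 * r^2 * L)) / (r ^ 2 * L) ^ 2 := by
    field_simp
    ring
  rw [hform]
  exact div_nonpos_of_nonpos_of_nonneg hP (by positivity)


set_option maxHeartbeats 1000000 in
theorem stmt_11 (r₀ lam Lam C₁ C₂ : ℝ) (hr₀ : 0 < r₀)
    (hlam : 0 < lam) (hLam : lam ≤ Lam) (hC₁ : 0 < C₁) (hC₂ : 0 < C₂)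
    (a : Fin 2 → Fin 2 → EuclideanSpace ℝ (Fin 2) → ℝ)
    (b : Fin 2 → EuclideanSpace ℝ (Fin 2) → ℝ)
    (hsym : ∀ i j x, a i j x = a j i x)
    (hell : ∀ (x : EuclideanSpace ℝ (Fin 2)) (ξ : Fin 2 → ℝ), r₀ ≤ ‖x‖ →
      lam * ∑ i, (ξ i) ^ 2 ≤ (∑ i, ∑ j, a i j x * ξ i * ξ j) ∧
      (∑ i, ∑ j, a i j x * ξ i * ξ j) ≤ Lam * ∑ i, (ξ i) ^ 2)
    (haij : ∀ (i j : Fin 2) (x : EuclideanSpace ℝ (Fin 2)), r₀ ≤ ‖x‖ →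
      |a i j x - (if i = j then 1 else 0)| ≤ C₁ * ‖x‖⁻¹)
    (hbi : ∀ (i : Fin 2) (x : EuclideanSpace ℝ (Fin 2)), r₀ ≤ ‖x‖ →
      |b i x| ≤ C₂ * (‖x‖ ^ 2)⁻¹) :
    ∃ r₀' : ℝ, max r₀ 3 ≤ r₀' ∧
      ∀ x : EuclideanSpace ℝ (Fin 2), r₀' ≤ ‖x‖ →
        (∑ i, ∑ j, a i j x *
            pd11 (pd11 (fun y => Real.log (Real.log ‖y‖)) j) i x) +
          (∑ i, b i x * pd11 (fun y => Real.log (Real.log ‖y‖)) i x) ≤ 0 := by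
  set K := 8 * C₁ + C₂ with hK
  have hKpos : 0 < K := by positivity
  refine ⟨max (max r₀ 3) (16 * K ^ 2), le_max_left _ _, ?_⟩
  intro x hx
  set r := ‖x‖ with hrdef
  have hr0x : r₀ ≤ r := le_trans (le_trans (le_max_left _ _) (le_max_left _ _)) hx
  have hr3 : 3 ≤ r := le_trans (le_trans (le_max_right _ _) (le_max_left _ _)) hx
  have hrK : 16 * K ^ 2 ≤ r := le_trans (le_max_right _ _) hx
  have hrp : (0:ℝ) < r := by linarith
  have hx1 : 1 < ‖x‖ := by rw [← hrdef]; linarith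
  have hgg : gg x = r ^ 2 := by rw [gg_eq]
  set L := Real.log (r ^ 2) with hLdef
  have hLr : L = 2 * Real.log r := by rw [hLdef, Real.log_pow]; push_cast; ring
  have hlog3 : (1:ℝ) < Real.log 3 := by
    have h3 : Real.exp 1 < 3 := by
      have := Real.exp_one_lt_d9; linarith
    calc (1:ℝ) = Real.log (Real.exp 1) := by simp
    _ < Real.log 3 := Real.log_lt_log (Real.exp_pos 1) h3
  have hL2 : 2 ≤ L := by
    rw [hLr]
    have : Real.log 3 ≤ Real.log r := Real.log_le_log (by norm_num) hr3
    linarith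
  have hLpos : (0:ℝ) < L := by linarith
  have hKL : K * L ≤ r := by
    have hs : Real.sqrt r ^ 2 = r := Real.sq_sqrt hrp.le
    have hs0 : 0 < Real.sqrt r := Real.sqrt_pos.mpr hrp
    have h1 : Real.log r = 2 * Real.log (Real.sqrt r) := by
      rw [Real.log_sqrt hrp.le]; ring
    have h2 : Real.log (Real.sqrt r) ≤ Real.sqrt r - 1 := Real.log_le_sub_one_of_pos hs0
    have hL4 : L ≤ 4 * Real.sqrt r := by rw [hLr, h1]; linarith
    have h4K : 4 * K ≤ Real.sqrt r := by
      have h' : (4*K)^2 ≤ r := by nlinarith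
      nlinarith [Real.sqrt_le_sqrt h', Real.sqrt_sq (by positivity : (0:ℝ) ≤ 4*K)]
    nlinarith [mul_nonneg (by linarith : (0:ℝ) ≤ Real.sqrt r - 4*K)
      (by linarith : (0:ℝ) ≤ 4*Real.sqrt r - L)]
  have hsum : (x 0) ^ 2 + (x 1) ^ 2 = r ^ 2 := by rw [← hgg]; rfl
  have e00 : |a 0 0 x - 1| ≤ C₁ * r⁻¹ := by simpa using haij 0 0 x hr0x
  have e01 : |a 0 1 x| ≤ C₁ * r⁻¹ := by simpa using haij 0 1 x hr0x
  have e10 : |a 1 0 x| ≤ C₁ * r⁻¹ := by simpa using haij 1 0 x hr0x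
  have e11 : |a 1 1 x - 1| ≤ C₁ * r⁻¹ := by simpa using haij 1 1 x hr0x
  have f0 : |b 0 x| ≤ C₂ * (r ^ 2)⁻¹ := hbi 0 x hr0x
  have f1 : |b 1 x| ≤ C₂ * (r ^ 2)⁻¹ := hbi 1 x hr0x
  have key := key_ineq r L C₁ C₂ (x 0) (x 1) (a 0 0 x) (a 0 1 x) (a 1 0 x) (a 1 1 x)
    (b 0 x) (b 1 x) hr3 hL2 hC₁ hC₂ hsum (by rw [← hK]; exact hKL) e00 e01 e10 e11 f0 f1
  simp only [Fin.sum_univ_two, pd2_eq x hx1, pd1_eq x hx1, hgg, ← hLdef]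
  norm_num at key ⊢
  linarith [key]
end
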